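/- Let P = (A,B,R), P' = (A',B',R'), Q = (C,B,T) and Q' = (C',B',T') be relations. If ONE has a winning strategy in the game G(P',Q') and S_1(Dom(P), Dom(Q)) holds, then S_1(Dom(P⊗P'), Dom(Q⊗Q')) holds. -/

import Mathlib

open Set

/-- `GDom R` is the set of dominating families of the relation `R`:
sets `Z ⊆ B` such that every `a ∈ A` is dominated by some `b ∈ Z`. -/
def GDom {α β : Type*} (R : α → β → Prop) : Set (Set β) :=
  {Z | ∀ a : α, ∃ b ∈ Z, R a b}

/-- A relation is total: every element of the domain is dominated by something. -/
def IsTotalRel {α β : Type*} (R : α → β → Prop) : Prop :=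
  ∀ a : α, ∃ b : β, R a b

/-- The product of two relations. -/
def GProd {α β α' β' : Type*} (R : α → β → Prop) (R' : α' → β' → Prop) :
    α × α' → β × β' → Prop :=
  fun a b => R a.1 b.1 ∧ R' a.2 b.2

/-- The finite history consisting of the first `n` moves of the sequence `b`. -/
def GHist {β : Type*} (b : ℕ → β) (n : ℕ) : List β :=
  List.ofFn fun i : Fin n => b i

/-- ONE has a winning strategy in the game `G(P,Q)`: in inning `n` ONE plays `aₙ ∈ A`,
TWO answers `bₙ` with `R aₙ bₙ`; ONE wins iff `{bₙ : n} ∈ GDom T`. -/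
def OneWinsG {α β γ : Type*} (R : α → β → Prop) (T : γ → β → Prop) : Prop :=
  ∃ σ : List β → α, ∀ b : ℕ → β,
    (∀ n, R (σ (GHist b n)) (b n)) → Set.range b ∈ GDom T

/-- TWO has a winning strategy in the game `G(P,Q)`. -/
def TwoWinsG {α β γ : Type*} (R : α → β → Prop) (T : γ → β → Prop) : Prop :=
  ∃ τ : List α → β, ∀ a : ℕ → α,
    (∀ n, R (a n) (τ (GHist a (n + 1)))) ∧
    Set.range (fun n => τ (GHist a (n + 1))) ∉ GDom T

/-- ONE has a winning strategy in the game `G₁(𝒜,ℬ)`: in inning `n` ONE plays `Aₙ ∈ 𝒜`,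
TWO answers `bₙ ∈ Aₙ`; TWO wins iff `{bₙ : n} ∈ ℬ`. -/
def OneWinsG1 {β : Type*} (𝒜 ℬ : Set (Set β)) : Prop :=
  ∃ σ : List β → Set β, (∀ h, σ h ∈ 𝒜) ∧
    ∀ b : ℕ → β, (∀ n, b n ∈ σ (GHist b n)) → Set.range b ∉ ℬ

/-- TWO has a winning strategy in the game `G₁(𝒜,ℬ)`. -/
def TwoWinsG1 {β : Type*} (𝒜 ℬ : Set (Set β)) : Prop :=
  ∃ τ : List (Set β) → β, ∀ S : ℕ → Set β, (∀ n, S n ∈ 𝒜) →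
    (∀ n, τ (GHist S (n + 1)) ∈ S n) ∧
    Set.range (fun n => τ (GHist S (n + 1))) ∈ ℬ

/-- TWO has a winning strategy in the game `G_fin(𝒜,ℬ)`: in inning `n` ONE plays `Aₙ ∈ 𝒜`,
TWO answers a finite `Fₙ ⊆ Aₙ`; TWO wins iff `⋃ₙ Fₙ ∈ ℬ`. -/
def TwoWinsGfin {β : Type*} (𝒜 ℬ : Set (Set β)) : Prop :=
  ∃ τ : List (Set β) → Set β, ∀ S : ℕ → Set β, (∀ n, S n ∈ 𝒜) →
    (∀ n, τ (GHist S (n + 1)) ⊆ S n ∧ (τ (GHist S (n + 1))).Finite) ∧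
    (⋃ n, τ (GHist S (n + 1))) ∈ ℬ

/-- `(𝒜,ℬ)`-Lindelöf: every member of `𝒜` has a countable subset belonging to `ℬ`. -/
def LindelofFam {β : Type*} (𝒜 ℬ : Set (Set β)) : Prop :=
  ∀ S ∈ 𝒜, ∃ C ⊆ S, C.Countable ∧ C ∈ ℬ

/-- The selection principle `S₁(𝒜,ℬ)`. -/
def SelS1 {β : Type*} (𝒜 ℬ : Set (Set β)) : Prop :=
  ∀ A : ℕ → Set β, (∀ n, A n ∈ 𝒜) →
    ∃ b : ℕ → β, (∀ n, b n ∈ A n) ∧ Set.range b ∈ ℬ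

/-- The selection principle `S_fin(𝒜,ℬ)`. -/
def SelSfin {β : Type*} (𝒜 ℬ : Set (Set β)) : Prop :=
  ∀ A : ℕ → Set β, (∀ n, A n ∈ 𝒜) →
    ∃ F : ℕ → Set β, (∀ n, F n ⊆ A n ∧ (F n).Finite) ∧ (⋃ n, F n) ∈ ℬ

/-- `𝒪_X`: the family of open covers of `X`. -/
def OpenCovers (X : Type*) [TopologicalSpace X] : Set (Set (Set X)) :=
  {𝒰 | (∀ U ∈ 𝒰, IsOpen U) ∧ ⋃₀ 𝒰 = Set.univ}

/-- ONE has a winning strategy in the point-open game on `X`. -/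
def OneWinsPointOpen (X : Type*) [TopologicalSpace X] : Prop :=
  ∃ σ : List (Set X) → X, ∀ U : ℕ → Set X,
    (∀ n, IsOpen (U n) ∧ σ (GHist U n) ∈ U n) → Set.range U ∈ OpenCovers X

/-- TWO has a winning strategy in the point-open game on `X`. -/
def TwoWinsPointOpen (X : Type*) [TopologicalSpace X] : Prop :=
  ∃ τ : List X → Set X, ∀ x : ℕ → X,
    (∀ n, IsOpen (τ (GHist x (n + 1))) ∧ x n ∈ τ (GHist x (n + 1))) ∧
    Set.range (fun n => τ (GHist x (n + 1))) ∉ OpenCovers X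

/-- `𝔇_X`: the family of dense subsets of `X`. -/
def DenseSets (X : Type*) [TopologicalSpace X] : Set (Set X) :=
  {D | Dense D}

/-- ONE has a winning strategy in the point-picking game `G^D_ω(X)` of Berner and Juhász. -/
def OneWinsPointPicking (X : Type*) [TopologicalSpace X] : Prop :=
  ∃ σ : List X → Set X, (∀ h, IsOpen (σ h) ∧ (σ h).Nonempty) ∧
    ∀ x : ℕ → X, (∀ n, x n ∈ σ (GHist x n)) → Dense (Set.range x)

/-- TWO has a winning strategy in the point-picking game `G^D_ω(X)`. -/
def TwoWinsPointPicking (X : Type*) [TopologicalSpace X] : Prop :=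
  ∃ τ : List (Set X) → X, ∀ U : ℕ → Set X,
    (∀ n, IsOpen (U n) ∧ (U n).Nonempty) →
    (∀ n, τ (GHist U (n + 1)) ∈ U n) ∧
    ¬ Dense (Set.range fun n => τ (GHist U (n + 1)))

/-- `𝒟_X`: families of open sets whose union is dense in `X`. -/
def DenseUnionFams (X : Type*) [TopologicalSpace X] : Set (Set (Set X)) :=
  {𝒰 | (∀ U ∈ 𝒰, IsOpen U) ∧ Dense (⋃₀ 𝒰)}

/-- ONE has a winning strategy in Tkachuk's game `θ(X)`. -/
def OneWinsTheta (X : Type*) [TopologicalSpace X] : Prop :=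
  ∃ σ : List (Set X) → X, ∀ U : ℕ → Set X,
    (∀ n, IsOpen (U n) ∧ σ (GHist U n) ∈ U n) → Dense (⋃ n, U n)

/-- TWO has a winning strategy in Tkachuk's game `θ(X)`. -/
def TwoWinsTheta (X : Type*) [TopologicalSpace X] : Prop :=
  ∃ τ : List X → Set X, ∀ x : ℕ → X,
    (∀ n, IsOpen (τ (GHist x (n + 1))) ∧ x n ∈ τ (GHist x (n + 1))) ∧
    ¬ Dense (⋃ n, τ (GHist x (n + 1)))

/-- `Ω_x`: the family of subsets of `X` having `x` in their closure. -/
def OmegaPt {X : Type*} [TopologicalSpace X] (x : X) : Set (Set X) :=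
  {A | x ∈ closure A}

/-- ONE has a winning strategy in Gruenhage's game `G^c_{O,P}(X,x)`. -/
def OneWinsGruenhage {X : Type*} [TopologicalSpace X] (x : X) : Prop :=
  ∃ σ : List X → Set X, (∀ h, IsOpen (σ h) ∧ x ∈ σ h) ∧
    ∀ y : ℕ → X, (∀ n, y n ∈ σ (GHist y n)) → x ∈ closure (Set.range y)

/-- TWO has a winning strategy in Gruenhage's game `G^c_{O,P}(X,x)`. -/
def TwoWinsGruenhage {X : Type*} [TopologicalSpace X] (x : X) : Prop :=
  ∃ τ : List (Set X) → X, ∀ V : ℕ → Set X,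
    (∀ n, IsOpen (V n) ∧ x ∈ V n) →
    (∀ n, τ (GHist V (n + 1)) ∈ V n) ∧
    x ∉ closure (Set.range fun n => τ (GHist V (n + 1)))

/-- ONE has a winning strategy in the compact-open game on `X`. -/
def OneWinsCompactOpen (X : Type*) [TopologicalSpace X] : Prop :=
  ∃ σ : List (Set X) → Set X, (∀ h, IsCompact (σ h)) ∧
    ∀ U : ℕ → Set X, (∀ n, IsOpen (U n) ∧ σ (GHist U n) ⊆ U n) →
      (⋃ n, U n) = Set.univ

/-- `⪯` is downwards `P`-compatible. -/
def DownwardsCompat {α β : Type*} (R : α → β → Prop) (le : β → β → Prop) : Prop :=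
  ∀ a b₁ b₂, R a b₁ → R a b₂ → ∃ b, R a b ∧ le b b₁ ∧ le b b₂

/-- `⪯` is upwards `Q`-compatible. -/
def UpwardsCompat {γ β : Type*} (T : γ → β → Prop) (le : β → β → Prop) : Prop :=
  ∀ c b₁ b₂, T c b₁ → le b₁ b₂ → T c b₂

/-- `⪯` is countably downwards `P`-compatible. -/
def CountablyDownwardsCompat {α β : Type*} (R : α → β → Prop) (le : β → β → Prop) : Prop :=
  ∀ a, ∀ E : Set β, E.Countable → E.Nonempty → (∀ b ∈ E, R a b) →
    ∃ b', R a b' ∧ ∀ b ∈ E, le b' b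

/-- A relation is `ℵ₀`-preserving if some partial order on `B` is both upwards
compatible and countably downwards compatible with it. -/
def Aleph0Preserving {α β : Type*} (R : α → β → Prop) : Prop :=
  ∃ le : β → β → Prop, IsPartialOrder β le ∧
    UpwardsCompat R le ∧ CountablyDownwardsCompat R le

/-- `Dom_γ(T)`: the γ-dominating sequences of the relation `T`. -/
def GDomGamma {γ β : Type*} (T : γ → β → Prop) : Set (ℕ → β) :=
  {z | ∀ c : γ, {n : ℕ | ¬ T c (z n)}.Finite}

/-- ONE has a winning strategy in the game `G_γ(P,Q)`. -/
def OneWinsGgamma {α β γ : Type*} (R : α → β → Prop) (T : γ → β → Prop) : Prop :=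
  ∃ σ : List β → α, ∀ b : ℕ → β,
    (∀ n, R (σ (GHist b n)) (b n)) → b ∈ GDomGamma T

/-- TWO has a winning strategy in the game `G_γ(P,Q)`. -/
def TwoWinsGgamma {α β γ : Type*} (R : α → β → Prop) (T : γ → β → Prop) : Prop :=
  ∃ τ : List α → β, ∀ a : ℕ → α,
    (∀ n, R (a n) (τ (GHist a (n + 1)))) ∧
    (fun n => τ (GHist a (n + 1))) ∉ GDomGamma T

/-- ONE has a winning strategy in the game `G₁(𝒜, Dom_γ(T))`. -/
def OneWinsG1gamma {β γ : Type*} (𝒜 : Set (Set β)) (T : γ → β → Prop) : Prop :=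
  ∃ σ : List β → Set β, (∀ h, σ h ∈ 𝒜) ∧
    ∀ b : ℕ → β, (∀ n, b n ∈ σ (GHist b n)) → b ∉ GDomGamma T

/-- TWO has a winning strategy in the game `G₁(𝒜, Dom_γ(T))`. -/
def TwoWinsG1gamma {β γ : Type*} (𝒜 : Set (Set β)) (T : γ → β → Prop) : Prop :=
  ∃ τ : List (Set β) → β, ∀ S : ℕ → Set β, (∀ n, S n ∈ 𝒜) →
    (∀ n, τ (GHist S (n + 1)) ∈ S n) ∧
    (fun n => τ (GHist S (n + 1))) ∈ GDomGamma T

/-- The `ℵ₀`-modification of a relation: moves become nonempty countable subsets of `B`,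
dominated pointwise. -/
def CountMod {α β : Type*} (R : α → β → Prop) :
    α → {E : Set β // E.Countable ∧ E.Nonempty} → Prop :=
  fun a E => ∀ b ∈ E.1, R a b

/-!
Fix a winning strategy `σ` for ONE in `G(P',Q')` and spread the given sets `Zₙ` over the
nodes of the countably branching tree `ω^{<ω}`. At each node, ONE's move `a' = σ(history)`
turns the sets assigned to the children into `P`-dominating sets
`{b | ∃ b', (b, b') ∈ Z ∧ a' R' b'}`, from which `S₁(Dom(P), Dom(Q))` selects a
`Q`-dominating family. Given `(c, c')`, choosing at every node a child whose selected point
dominates `c` traces a play against `σ`; as `σ` wins, one of its moves dominates `c'`.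
-/

theorem GHist_succ {β : Type*} (b : ℕ → β) (n : ℕ) :
    GHist b (n + 1) = GHist b n ++ [b n] := by
  rw [GHist, List.ofFn_succ', List.concat_eq_append]
  rfl

theorem GDom_mono {γ β : Type*} {T : γ → β → Prop} {Z Z' : Set β} (hZZ' : Z ⊆ Z')
    (hZ : Z ∈ GDom T) : Z' ∈ GDom T := fun c =>
  let ⟨b, hb, hcb⟩ := hZ c
  ⟨b, hZZ' hb, hcb⟩

theorem image_fst_mem_GDom_of_mem_GDom_prod {α β α' β' : Type*} {R : α → β → Prop}
    {R' : α' → β' → Prop} {Z : Set (β × β')} (hZ : Z ∈ GDom (GProd R R')) (a' : α') :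
    Prod.fst '' {p ∈ Z | R' a' p.2} ∈ GDom R := fun a =>
  let ⟨p, hpZ, hR, hR'⟩ := hZ (a, a')
  ⟨p.1, ⟨p, ⟨hpZ, hR'⟩, rfl⟩, hR⟩

theorem SelS1.exists_prod_selection {α β γ α' β' : Type*} {R : α → β → Prop}
    {T : γ → β → Prop} {R' : α' → β' → Prop} (hS1 : SelS1 (GDom R) (GDom T))
    {Z : ℕ → Set (β × β')} (hZ : ∀ n, Z n ∈ GDom (GProd R R')) (a' : α') :
    ∃ p : ℕ → β × β', (∀ n, p n ∈ Z n) ∧ (∀ n, R' a' (p n).2) ∧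
      Set.range (fun n => (p n).1) ∈ GDom T := by
  obtain ⟨b, hb, hbT⟩ :=
    hS1 _ fun n => image_fst_mem_GDom_of_mem_GDom_prod (hZ n) a'
  choose p hp hpb using hb
  exact ⟨p, fun n => (hp n).1, fun n => (hp n).2, by simpa only [hpb] using hbT⟩

/-- Nodes are lists with the most recent branch index at the head: `k :: s` is the `k`-th
child of `s`, reached when TWO, having seen the history `h` at `s`, answers `ρ h s k`. -/
def treeHist {β' : Type*} (ρ : List β' → List ℕ → ℕ → β') : List ℕ → List β'
  | [] => []
  | k :: s => treeHist ρ s ++ [ρ (treeHist ρ s) s k]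

/-- The answers along the branch that follows `K` form a play against `σ`, which TWO loses. -/
theorem range_treeHist_mem_GDom {α' β' γ' : Type*} {R' : α' → β' → Prop}
    {T' : γ' → β' → Prop} {σ : List β' → α'}
    (hσ : ∀ b : ℕ → β', (∀ n, R' (σ (GHist b n)) (b n)) → Set.range b ∈ GDom T')
    {ρ : List β' → List ℕ → ℕ → β'} (hρ : ∀ h s k, R' (σ h) (ρ h s k)) (K : List ℕ → ℕ) :
    Set.range (fun s => ρ (treeHist ρ s) s (K s)) ∈ GDom T' := by
  let branch : ℕ → List ℕ := fun n => Nat.rec [] (fun _ s => K s :: s) n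
  let play : ℕ → β' := fun n => ρ (treeHist ρ (branch n)) (branch n) (K (branch n))
  have hist_branch : ∀ n, treeHist ρ (branch n) = GHist play n := by
    intro n
    induction n with
    | zero => rfl
    | succ n ih => rw [GHist_succ, ← ih]; rfl
  refine GDom_mono ?_ (hσ play fun n => hist_branch n ▸ hρ _ _ _)
  rintro _ ⟨n, rfl⟩
  exact ⟨branch n, rfl⟩

theorem statement6_general {α β γ α' β' γ' : Type*}
    (R : α → β → Prop) (T : γ → β → Prop)
    (R' : α' → β' → Prop) (T' : γ' → β' → Prop)
    (hwin : OneWinsG R' T')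
    (hS1 : SelS1 (GDom R) (GDom T)) :
    SelS1 (GDom (GProd R R')) (GDom (GProd T T')) := by
  intro Z hZ
  obtain ⟨σ, hσ⟩ := hwin
  let e : List ℕ × ℕ ≃ ℕ := Denumerable.eqv _
  -- The `k`-th child of node `s` draws its point from `Z (e (s, k))`.
  choose p hpZ hpR' hpT using fun (a' : α') (s : List ℕ) =>
    hS1.exists_prod_selection (fun k => hZ (e (s, k))) a'
  let ρ : List β' → List ℕ → ℕ → β' := fun h s k => (p (σ h) s k).2
  let sel : List ℕ × ℕ → β × β' := fun sk => p (σ (treeHist ρ sk.1)) sk.1 sk.2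
  have hselZ : ∀ sk, sel sk ∈ Z (e sk) := fun sk => hpZ _ _ _
  refine ⟨sel ∘ e.symm, fun n => by simpa using hselZ (e.symm n), ?_⟩
  rintro ⟨c, c'⟩
  have hK : ∀ s, ∃ k, T c (sel (s, k)).1 := fun s => by
    obtain ⟨_, ⟨k, rfl⟩, hk⟩ := hpT (σ (treeHist ρ s)) s c
    exact ⟨k, hk⟩
  choose K hK using hK
  obtain ⟨_, ⟨s, rfl⟩, hs⟩ := range_treeHist_mem_GDom hσ (fun _ _ _ => hpR' _ _ _) K c'
  exact ⟨sel (s, K s), ⟨e (s, K s), by simp⟩, hK s, hs⟩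

/-- If ONE has a winning strategy in `G(P',Q')` and `S₁(Dom(P), Dom(Q))`
holds, then `S₁(Dom(P⊗P'), Dom(Q⊗Q'))` holds. -/
theorem statement6 {α β γ α' β' γ' : Type*}
    [Nonempty α] [Nonempty γ] [Nonempty α'] [Nonempty γ']
    (R : α → β → Prop) (T : γ → β → Prop)
    (R' : α' → β' → Prop) (T' : γ' → β' → Prop)
    (hR : IsTotalRel R) (hT : IsTotalRel T)
    (hR' : IsTotalRel R') (hT' : IsTotalRel T')
    (hwin : OneWinsG R' T')
    (hS1 : SelS1 (GDom R) (GDom T)) :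
    SelS1 (GDom (GProd R R')) (GDom (GProd T T')) :=
  statement6_general R T R' T' hwin hS1
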